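/- Let X be a measurable space with a probability measure ν, E a real normed vector space, f : X → E a measurable map, and a₁, a₋₁ ∈ X two anchors. Set f₁(x) = ‖f(x) − f(a₁)‖, D = ‖f(a₁) − f(a₋₁)‖, and let β₁ ∈ ℝ with z := D/2 − β₁ > 0. Suppose f₁ satisfies the sub-Gaussian-type tail bound: there exist constants c > 0 and K > 0 such that for every t > 0, ν{x : |f₁(x) − β₁| ≥ t} ≤ 2 exp(−c t² / K). Then the misclassification probability satisfies ν{x : ‖f(x) − f(a₋₁)‖ ≤ ‖f(x) − f(a₁)‖} ≤ 2 exp(−c z² / K). -/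
import Mathlib

open MeasureTheory

/-- Under a sub-Gaussian-type tail bound on the distance-to-anchor function
`f₁(x) = ‖f(x) − f(a₁)‖` around `β₁`, the misclassification probability is
bounded by `2 exp(−c z² / K)` with `z = D/2 − β₁`. -/
theorem misclassification_prob_subgaussian_bound
    {X : Type*} [MeasurableSpace X] (ν : Measure X) [IsProbabilityMeasure ν]
    {E : Type*} [NormedAddCommGroup E] [NormedSpace ℝ E] [MeasurableSpace E]
    (f : X → E) (hf : Measurable f) (a₁ aneg : X) (β₁ c K : ℝ)
    (hc : 0 < c) (hK : 0 < K)
    (hz : 0 < ‖f a₁ - f aneg‖ / 2 - β₁)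
    (htail : ∀ t : ℝ, 0 < t →
      ν {x : X | |‖f x - f a₁‖ - β₁| ≥ t} ≤
        ENNReal.ofReal (2 * Real.exp (-c * t ^ 2 / K))) :
    ν {x : X | ‖f x - f aneg‖ ≤ ‖f x - f a₁‖} ≤
      ENNReal.ofReal
        (2 * Real.exp (-c * (‖f a₁ - f aneg‖ / 2 - β₁) ^ 2 / K)) := by
  refine le_trans (measure_mono ?_) (htail _ hz)
  intro x hx
  simp only [Set.mem_setOf_eq] at hx ⊢
  have h1 : ‖f a₁ - f aneg‖ ≤ ‖f a₁ - f x‖ + ‖f x - f aneg‖ := by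
    have := norm_sub_le_norm_sub_add_norm_sub (f a₁) (f x) (f aneg)
    simpa using this
  have h2 : ‖f a₁ - f x‖ = ‖f x - f a₁‖ := norm_sub_rev _ _
  have h3 : ‖f a₁ - f aneg‖ / 2 - β₁ ≤ ‖f x - f a₁‖ - β₁ := by linarith
  exact le_trans h3 (le_abs_self _)
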